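/- Let G be a graph whose vertex set is partitioned into four pairwise disjoint sets X, X', C, C' such that X and X' are cliques, C and C' are independent sets, every neighbour of a vertex of C lies in X, and every neighbour of a vertex of C' lies in X'. Then G is P_7-free, i.e., G contains no induced path on 7 vertices. -/
import Mathlib


/-- if the vertex set of `G` is partitioned into cliques `X`, `X'` and
independent sets `C`, `C'` such that all neighbours of `C` lie in `X` and all neighbours
of `C'` lie in `X'`, then `G` is `P₇`-free. -/
theorem partition_clique_indep_p7free {V : Type*} (G : SimpleGraph V)
    (X X' C C' : Set V)
    (hdXX' : Disjoint X X') (hdXC : Disjoint X C) (hdXC' : Disjoint X C')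
    (hdX'C : Disjoint X' C) (hdX'C' : Disjoint X' C') (hdCC' : Disjoint C C')
    (hcover : X ∪ X' ∪ C ∪ C' = Set.univ)
    (hXclique : G.IsClique X) (hX'clique : G.IsClique X')
    (hCindep : C.Pairwise fun a b => ¬ G.Adj a b)
    (hC'indep : C'.Pairwise fun a b => ¬ G.Adj a b)
    (hCnbr : ∀ c ∈ C, ∀ w : V, G.Adj c w → w ∈ X)
    (hC'nbr : ∀ c ∈ C', ∀ w : V, G.Adj c w → w ∈ X') :
    ¬ Nonempty (SimpleGraph.pathGraph 7 ↪g G) := by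
  rintro ⟨f⟩
  have hadj : ∀ i j : Fin 7, G.Adj (f i) (f j) ↔ (SimpleGraph.pathGraph 7).Adj i j :=
    fun i j => f.map_adj_iff
  have hne : ∀ i j : Fin 7, i ≠ j → f i ≠ f j :=
    fun i j h he => h (f.injective he)
  have mid : ∀ a b c : Fin 7, (SimpleGraph.pathGraph 7).Adj b a →
      (SimpleGraph.pathGraph 7).Adj b c → ¬ (SimpleGraph.pathGraph 7).Adj a c →
      a ≠ c → f b ∈ X ∪ X' := by
    intro a b c hba hbc hac hne'
    have hmem : f b ∈ X ∪ X' ∪ C ∪ C' := by rw [hcover]; exact Set.mem_univ _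
    rcases hmem with ((h | h) | h) | h
    · exact Or.inl h
    · exact Or.inr h
    · have h1 : f a ∈ X := hCnbr _ h _ ((hadj b a).2 hba)
      have h2 : f c ∈ X := hCnbr _ h _ ((hadj b c).2 hbc)
      exact absurd ((hadj a c).1 (hXclique h1 h2 (hne _ _ hne'))) hac
    · have h1 : f a ∈ X' := hC'nbr _ h _ ((hadj b a).2 hba)
      have h2 : f c ∈ X' := hC'nbr _ h _ ((hadj b c).2 hbc)
      exact absurd ((hadj a c).1 (hX'clique h1 h2 (hne _ _ hne'))) hac
  have clash : ∀ (S : Set V), G.IsClique S → ∀ a b : Fin 7,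
      ¬ (SimpleGraph.pathGraph 7).Adj a b → a ≠ b → f a ∈ S → f b ∈ S → False := by
    intro S hS a b hnadj hne' ha hb
    exact hnadj ((hadj a b).1 (hS ha hb (hne _ _ hne')))
  have pa : ∀ {a b : Fin 7}, (a:ℕ) + 1 = (b:ℕ) ∨ (b:ℕ) + 1 = (a:ℕ) → (SimpleGraph.pathGraph 7).Adj a b := fun h => (SimpleGraph.pathGraph_adj).2 h
  have h1 : f 1 ∈ X ∪ X' := mid 0 1 2 (pa (by decide)) (pa (by decide)) (by simp [SimpleGraph.pathGraph_adj] <;> omega) (by decide)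
  have h3 : f 3 ∈ X ∪ X' := mid 2 3 4 (pa (by decide)) (pa (by decide)) (by simp [SimpleGraph.pathGraph_adj] <;> omega) (by decide)
  have h5 : f 5 ∈ X ∪ X' := mid 4 5 6 (pa (by decide)) (pa (by decide)) (by simp [SimpleGraph.pathGraph_adj] <;> omega) (by decide)
  rcases h1 with h1 | h1 <;> rcases h3 with h3 | h3 <;> rcases h5 with h5 | h5 <;>
    first
      | exact clash X hXclique 1 3 (by simp [SimpleGraph.pathGraph_adj] <;> omega) (by decide) h1 h3
      | exact clash X hXclique 1 5 (by simp [SimpleGraph.pathGraph_adj] <;> omega) (by decide) h1 h5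
      | exact clash X hXclique 3 5 (by simp [SimpleGraph.pathGraph_adj] <;> omega) (by decide) h3 h5
      | exact clash X' hX'clique 1 3 (by simp [SimpleGraph.pathGraph_adj] <;> omega) (by decide) h1 h3
      | exact clash X' hX'clique 1 5 (by simp [SimpleGraph.pathGraph_adj] <;> omega) (by decide) h1 h5
      | exact clash X' hX'clique 3 5 (by simp [SimpleGraph.pathGraph_adj] <;> omega) (by decide) h3 h5
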